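/- arXiv:1602.01010 — 2 statements merged into one kernel-verified Lean document; each statement's English description precedes it below -/
import Mathlib

section
/- Let k be a field of characteristic not 2 and α ∈ k^×. If α is a sum of n squares in k^× (n ≥ 1), then in GW(k), 2^n⟨1⟩ = 2^{n-1}⟨2,2α⟩, where ⟨2,2α⟩ = ⟨2⟩ + ⟨2α⟩. -/
/-!
The chain relation applied to `β + t² = α` gives `⟨β⟩ + 1 = ⟨α⟩ + ⟨αβ⟩`, i.e. `⟨α⟩` fixes `1 + ⟨β⟩`.
By induction on the number of squares, if `α` is a sum of `n + 1` squares then `2ⁿ⟨α⟩ = 2ⁿ`.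
Together with `2⟨1⟩ = 2⟨2⟩` (the chain relation for `1 + 1 = 2`) this gives
`2ⁿ⁻¹⟨2⟩(1 + ⟨α⟩) = 2ⁿ⟨2⟩ = 2ⁿ`.
-/

/-- The relations ideal defining the Grothendieck–Witt ring of a field `k`
(characteristic ≠ 2) by its standard presentation: generators `⟨a⟩` for
`a ∈ kˣ` (multiplicative via the group algebra), with relations
`⟨a²⟩ = 1` and the chain relation `⟨a⟩ + ⟨b⟩ = ⟨a+b⟩ + ⟨(a+b)ab⟩` when `a + b ≠ 0`. -/
noncomputable def GWIdeal (k : Type) [Field k] : Ideal (MonoidAlgebra ℤ kˣ) :=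
  Ideal.span { x | (∃ a : kˣ, x = MonoidAlgebra.of ℤ kˣ (a * a) - 1) ∨
    (∃ a b c : kˣ, ((a : k) + (b : k) = (c : k)) ∧
      x = MonoidAlgebra.of ℤ kˣ a + MonoidAlgebra.of ℤ kˣ b
        - MonoidAlgebra.of ℤ kˣ c - MonoidAlgebra.of ℤ kˣ (c * a * b)) }

/-- The Grothendieck–Witt ring of a field `k` of characteristic ≠ 2. -/
def GW (k : Type) [Field k] : Type := MonoidAlgebra ℤ kˣ ⧸ GWIdeal k

noncomputable instance (k : Type) [Field k] : CommRing (GW k) :=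
  Ideal.Quotient.commRing (GWIdeal k)

/-- The class `⟨a⟩` of the one-dimensional quadratic form `x ↦ a x²` in `GW k`. -/
noncomputable def GWform (k : Type) [Field k] (a : kˣ) : GW k :=
  Ideal.Quotient.mk (GWIdeal k) (MonoidAlgebra.of ℤ kˣ a)

section GWform

variable {k : Type} [Field k]

lemma GWform_mul (a b : kˣ) : GWform k (a * b) = GWform k a * GWform k b := by
  unfold GWform
  rw [map_mul, map_mul]
  rfl

lemma GWform_mul_self (a : kˣ) : GWform k (a * a) = 1 := by
  have hmem : MonoidAlgebra.of ℤ kˣ (a * a) - 1 ∈ GWIdeal k := Ideal.subset_span (Or.inl ⟨a, rfl⟩)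
  exact (Ideal.Quotient.eq.mpr hmem).trans (map_one _)

lemma GWform_one : GWform k 1 = 1 := by
  simpa using GWform_mul_self (k := k) 1

lemma GWform_sq {t : k} (ht : t ^ 2 ≠ 0) : GWform k (Units.mk0 (t ^ 2) ht) = 1 := by
  have ht' : t ≠ 0 := by rintro rfl; simp at ht
  rw [← GWform_mul_self (Units.mk0 t ht')]
  congr 1
  ext
  simp [sq]

lemma GWform_add_GWform_of_add_eq {a b c : kˣ} (h : (a : k) + b = c) :
    GWform k a + GWform k b = GWform k c + GWform k (c * a * b) := by
  have hmem : MonoidAlgebra.of ℤ kˣ a + MonoidAlgebra.of ℤ kˣ b - MonoidAlgebra.of ℤ kˣ c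
      - MonoidAlgebra.of ℤ kˣ (c * a * b) ∈ GWIdeal k :=
    Ideal.subset_span (Or.inr ⟨a, b, c, h, rfl⟩)
  have hquot := Ideal.Quotient.eq (I := GWIdeal k)
    (x := MonoidAlgebra.of ℤ kˣ a + MonoidAlgebra.of ℤ kˣ b)
    (y := MonoidAlgebra.of ℤ kˣ c + MonoidAlgebra.of ℤ kˣ (c * a * b)) |>.mpr
    (by convert hmem using 1; ring)
  rwa [map_add, map_add] at hquot

lemma GWform_add_self (h2 : (2 : k) ≠ 0) (a : kˣ) :
    GWform k a + GWform k a = GWform k (Units.mk0 2 h2 * a) + GWform k (Units.mk0 2 h2 * a) := by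
  rw [GWform_add_GWform_of_add_eq (c := Units.mk0 2 h2 * a) (by simp; ring),
    mul_assoc, GWform_mul _ (a * a), GWform_mul_self, mul_one]

lemma GWform_mul_one_add_GWform_of_add_sq {α β t : kˣ} (h : (β : k) + (t : k) ^ 2 = α) :
    GWform k α * (1 + GWform k β) = 1 + GWform k β := by
  have hchain := GWform_add_GWform_of_add_eq (a := β) (b := t * t) (c := α) (by simpa [sq] using h)
  rw [GWform_mul_self, mul_assoc, GWform_mul, GWform_mul _ (t * t), GWform_mul_self,
    mul_one] at hchain
  linear_combination -hchain

lemma two_pow_succ_mul_GWform_add_sq {m : ℕ} {a : k}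
    (ha : ∀ h : a ≠ 0, (2 : GW k) ^ m * GWform k (Units.mk0 a h) = 2 ^ m)
    (t : k) (h : a + t ^ 2 ≠ 0) :
    (2 : GW k) ^ (m + 1) * GWform k (Units.mk0 (a + t ^ 2) h) = 2 ^ (m + 1) := by
  by_cases ht : t = 0
  · subst ht
    have h' : a ≠ 0 := by simpa using h
    have hunit : Units.mk0 (a + 0 ^ 2) h = Units.mk0 a h' := by ext; simp
    rw [hunit, pow_succ, mul_right_comm, ha h']
  by_cases ha0 : a = 0
  · subst ha0
    have hunit : Units.mk0 (0 + t ^ 2) h = Units.mk0 (t ^ 2) (by simpa using h) := by ext; simp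
    rw [hunit, GWform_sq, mul_one]
  have hfix := GWform_mul_one_add_GWform_of_add_sq (α := Units.mk0 (a + t ^ 2) h)
    (β := Units.mk0 a ha0) (t := Units.mk0 t ht) rfl
  calc (2 : GW k) ^ (m + 1) * GWform k (Units.mk0 (a + t ^ 2) h)
      = GWform k (Units.mk0 (a + t ^ 2) h) * (1 + GWform k (Units.mk0 a ha0)) * 2 ^ m := by
        linear_combination -GWform k (Units.mk0 (a + t ^ 2) h) * ha ha0
    _ = 2 ^ (m + 1) := by
        linear_combination (2 : GW k) ^ m * hfix + ha ha0

lemma two_pow_mul_GWform_sum_sq (n : ℕ) (x : Fin (n + 1) → k) (h : ∑ i, x i ^ 2 ≠ 0) :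
    (2 : GW k) ^ n * GWform k (Units.mk0 _ h) = 2 ^ n := by
  induction n with
  | zero =>
    have hunit : Units.mk0 _ h = Units.mk0 (x 0 ^ 2) (by simpa using h) := by ext; simp
    rw [hunit, GWform_sq, pow_zero, mul_one]
  | succ n ih =>
    have hsplit : ∑ i, x i ^ 2 = ∑ i : Fin (n + 1), x i.castSucc ^ 2 + x (Fin.last _) ^ 2 :=
      Fin.sum_univ_castSucc _
    have hunit : Units.mk0 _ h = Units.mk0 _ (hsplit ▸ h) := by ext; exact hsplit
    rw [hunit]
    exact two_pow_succ_mul_GWform_add_sq (ih _) _ _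

end GWform

/-- If `α ∈ kˣ` is a sum of `n ≥ 1` squares in a field `k` of characteristic ≠ 2,
then `2ⁿ⟨1⟩ = 2ⁿ⁻¹⟨2, 2α⟩` in `GW(k)`. -/
theorem stmt3 (k : Type) [Field k] (h2 : (2 : k) ≠ 0) (n : ℕ) (hn : 1 ≤ n) (α : kˣ)
    (hα : ∃ x : Fin n → k, (α : k) = ∑ i, x i ^ 2) :
    (2 ^ n : ℤ) • GWform k 1 =
      (2 ^ (n - 1) : ℤ) •
        (GWform k (Units.mk0 (2 : k) h2) + GWform k (Units.mk0 (2 : k) h2 * α)) := by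
  obtain ⟨m, rfl⟩ : ∃ m, n = m + 1 := ⟨n - 1, (Nat.succ_pred_eq_of_pos hn).symm⟩
  obtain ⟨x, hx⟩ := hα
  have hαfix : (2 : GW k) ^ m * GWform k α = 2 ^ m := by
    have hunit : α = Units.mk0 _ (hx ▸ α.ne_zero) := by ext; exact hx
    rw [hunit]
    exact two_pow_mul_GWform_sum_sq m x _
  have htwo : (2 : GW k) = 2 * GWform k (Units.mk0 2 h2) := by
    have := GWform_add_self h2 1
    rw [mul_one, GWform_one] at this
    linear_combination this
  rw [GWform_mul, GWform_one, zsmul_eq_mul, zsmul_eq_mul]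
  push_cast
  linear_combination (2 : GW k) ^ m * htwo - GWform k (Units.mk0 2 h2) * hαfix
end

section
/- Let k be a field of characteristic not 2 and L = k(√α) a quadratic extension where α ∈ k^× is not a sum of squares in k. Then the Dress map h_{L/k} : A(ℤ/2ℤ) → GW(k) is injective. -/
open scoped Classical in
/-- The "mark vector" of the `G`-set `G/H`: the function sending a subgroup `K` to
the number of `K`-fixed points of `G/H`. -/
noncomputable def mark {G : Type} [Group G] (H : Subgroup G) : Subgroup G → ℤ :=
  fun K => (Nat.card (MulAction.fixedPoints K (G ⧸ H)) : ℤ)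

/-- The Burnside ring `A(G)` of a finite group `G`, realized via the (injective) mark
homomorphism as the subring of `∏_{K ≤ G} ℤ` generated by the marks of the transitive
`G`-sets `G/H`. -/
noncomputable def BurnsideRing (G : Type) [Group G] : Subring (Subgroup G → ℤ) :=
  Subring.closure (Set.range (mark (G := G)))

/-- The basis element `[G/H]` of the Burnside ring `A(G)`. -/
noncomputable def burnsideElt {G : Type} [Group G] (H : Subgroup G) : BurnsideRing G :=
  ⟨mark H, Subring.subset_closure ⟨H, rfl⟩⟩

/-- `x ∈ GW k` is the class of the quadratic form `q`: `q` is isometric to a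
diagonal form `⟨d₁, …, d_m⟩` and `x = ⟨d₁⟩ + ⋯ + ⟨d_m⟩`. -/
def IsGWClassOf (k : Type) [Field k] {V : Type} [AddCommGroup V] [Module k V]
    (q : QuadraticForm k V) (x : GW k) : Prop :=
  ∃ (m : ℕ) (d : Fin m → kˣ),
    QuadraticMap.Equivalent q (QuadraticMap.weightedSumSquares k fun i => (d i : k)) ∧
    x = ∑ i, GWform k (d i)

/-- `h` is the Dress map `A(G) → GW(k)` of the Galois extension `L/k`:
the ring homomorphism sending the class `[G/H]` to the class in `GW(k)` of the trace
form `x ↦ tr_{L^H/k}(x²)` of the fixed field `L^H`. -/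
def IsDressMap (k L : Type) [Field k] [Field L] [Algebra k L]
    (h : BurnsideRing (L ≃ₐ[k] L) →+* GW k) : Prop :=
  ∀ H : Subgroup (L ≃ₐ[k] L),
    IsGWClassOf k (Algebra.traceForm k (IntermediateField.fixedField H)).toQuadraticMap
      (h (burnsideElt H))

/-!
Since `α` is not a sum of squares, `k` has an ordering `P` in which `α` is negative
(Artin–Schreier: adjoin `-α` to the preordering of sums of squares and enlarge it to a maximal
preordering by Zorn's lemma). The signature at `P` is a ring homomorphism `GW k → ℤ`, as is the
rank. For `G = Gal(L/k)` of order 2 every element of `A(G)` is `a + b [G/e]`, and `[G/e]` maps to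
the trace form of `L/k`, which has rank 2 and takes the values `tr 1 = 2 > 0` and
`tr (s²) = 2α < 0`, hence has signature 0. So if `a + b [G/e]` maps to 0, the signature gives
`a = 0` and the rank gives `a + 2b = 0`.
-/

theorem isSumSq_of_isSumSq_neg_one {F : Type*} [Field F] (h2 : (2 : F) ≠ 0)
    (h : IsSumSq (-1 : F)) (a : F) : IsSumSq a := by
  have key : a = (a + 1) / 2 * ((a + 1) / 2) + -1 * ((a - 1) / 2 * ((a - 1) / 2)) := by
    field_simp; ring
  rw [key]
  exact (IsSumSq.mul_self _).add (h.mul (IsSumSq.mul_self _))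

namespace RingPreordering

section CommRing

variable {R : Type*} [CommRing R]

variable (R) in
def sumSq [IsSemireal R] : RingPreordering R where
  toSubsemiring := Subsemiring.sumSq R
  mem_of_isSquare' hx := Subsemiring.mem_sumSq.mpr hx.isSumSq
  neg_one_notMem' := fun h => IsSemireal.not_isSumSq_neg_one R (Subsemiring.mem_sumSq.mp h)

theorem mem_sumSq [IsSemireal R] {x : R} : x ∈ sumSq R ↔ IsSumSq x :=
  Subsemiring.mem_sumSq

theorem exists_le_isMax (P : RingPreordering R) : ∃ Q, P ≤ Q ∧ IsMax Q := by
  refine zorn_le_nonempty_Ici₀ P (fun c _ hc Q₀ hQ₀ => ?_) P le_rfl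
  have total : ∀ {x y : R}, (∃ Q ∈ c, x ∈ Q) → (∃ Q ∈ c, y ∈ Q) →
      ∃ Q ∈ c, x ∈ Q ∧ y ∈ Q := by
    rintro x y ⟨Q₁, hQ₁, hx⟩ ⟨Q₂, hQ₂, hy⟩
    rcases hc.total hQ₁ hQ₂ with h | h
    exacts [⟨Q₂, hQ₂, h hx, hy⟩, ⟨Q₁, hQ₁, hx, h hy⟩]
  refine ⟨mk' {x | ∃ Q ∈ c, x ∈ Q} (fun hx hy => ?_) (fun hx hy => ?_)
    (fun x => ⟨Q₀, hQ₀, Q₀.mul_self_mem x⟩) ?_, fun Q hQ x hx => ⟨Q, hQ, hx⟩⟩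
  · obtain ⟨Q, hQ, hx, hy⟩ := total hx hy
    exact ⟨Q, hQ, add_mem hx hy⟩
  · obtain ⟨Q, hQ, hx, hy⟩ := total hx hy
    exact ⟨Q, hQ, mul_mem hx hy⟩
  · rintro ⟨Q, -, h⟩
    exact Q.neg_one_notMem h

theorem weightedSumSquares_mem {ι : Type*} [Fintype ι] (P : RingPreordering R) {w : ι → R}
    (hw : ∀ i, w i ∈ P) (x : ι → R) : QuadraticMap.weightedSumSquares R w x ∈ P := by
  rw [QuadraticMap.weightedSumSquares_apply]
  exact sum_mem fun i _ => mul_mem (hw i) (P.mul_self_mem _)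

end CommRing

section Field

variable {F : Type*} [Field F]

def adjoin (P : RingPreordering F) {a : F} (ha : -a ∉ P) : RingPreordering F :=
  mk' {x | ∃ p ∈ P, ∃ q ∈ P, x = p + a * q}
    (by
      rintro _ _ ⟨p, hp, q, hq, rfl⟩ ⟨p', hp', q', hq', rfl⟩
      exact ⟨p + p', add_mem hp hp', q + q', add_mem hq hq', by ring⟩)
    (by
      rintro _ _ ⟨p, hp, q, hq, rfl⟩ ⟨p', hp', q', hq', rfl⟩
      exact ⟨p * p' + a * a * (q * q'), add_mem (mul_mem hp hp')
        (mul_mem (P.mul_self_mem a) (mul_mem hq hq')), p * q' + q * p',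
        add_mem (mul_mem hp hq') (mul_mem hq hp'), by ring⟩)
    (fun x => ⟨x * x, P.mul_self_mem x, 0, zero_mem P, by ring⟩)
    (by
      rintro ⟨p, hp, q, hq, h⟩
      rcases eq_or_ne q 0 with rfl | hq0
      · exact P.neg_one_notMem (by simpa [h] using hp)
      · -- `-1 = p + a q` exhibits `-a = (1 + p) / q` as an element of `P`.
        refine ha ?_
        have : -a = (1 + p) * q⁻¹ := by
          field_simp
          linear_combination h
        rw [this]
        exact mul_mem (add_mem (one_mem P) hp) (inv_mem hq))

variable {P : RingPreordering F} {a : F}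

theorem le_adjoin (ha : -a ∉ P) : P ≤ P.adjoin ha :=
  fun x hx => ⟨x, hx, 0, zero_mem P, by ring⟩

theorem mem_adjoin_self (ha : -a ∉ P) : a ∈ P.adjoin ha :=
  ⟨0, zero_mem P, 1, one_mem P, by ring⟩

theorem hasMemOrNegMem_of_isMax (hP : IsMax P) : HasMemOrNegMem P where
  mem_or_neg_mem a := by
    by_contra! h
    exact h.1 (hP (le_adjoin h.2) (mem_adjoin_self h.2))

theorem exists_isOrdering_neg_mem (h2 : (2 : F) ≠ 0) (ha : ¬IsSumSq a) :
    ∃ P : RingPreordering F, P.IsOrdering ∧ -a ∈ P := by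
  have : IsSemireal F :=
    .of_not_isSumSq_neg_one fun h => ha (isSumSq_of_isSumSq_neg_one h2 h a)
  have hna : -(-a) ∉ sumSq F := by rwa [neg_neg, mem_sumSq]
  obtain ⟨P, hle, hP⟩ := ((sumSq F).adjoin hna).exists_le_isMax
  have := hasMemOrNegMem_of_isMax hP
  exact ⟨P, {}, hle (mem_adjoin_self hna)⟩

end Field

section Sign

variable {F : Type*} [Field F] (P : RingPreordering F)

theorem mul_mem_iff_of_mem {a b : F} (ha : a ∈ P) (ha0 : a ≠ 0) : a * b ∈ P ↔ b ∈ P :=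
  ⟨fun h => by simpa [ha0] using mul_mem (inv_mem ha) h, mul_mem ha⟩

variable [HasMemOrNegMem P]

theorem neg_mem_iff_notMem {a : F} (ha : a ≠ 0) : -a ∈ P ↔ a ∉ P :=
  ⟨fun h h' => ha (RingPreordering.eq_zero_of_mem_of_neg_mem h' h),
    (mem_or_neg_mem P a).resolve_left⟩

open scoped Classical in
noncomputable def sign : Fˣ →* ℤ where
  toFun a := if (a : F) ∈ P then 1 else -1
  map_one' := by simp [one_mem P]
  map_mul' a b := by
    by_cases ha : (a : F) ∈ P
    · simp [ha, mul_mem_iff_of_mem P ha a.ne_zero]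
    · have hab : (a : F) * b ∈ P ↔ (b : F) ∉ P := by
        rw [← neg_mul_neg, mul_mem_iff_of_mem P ((neg_mem_iff_notMem P a.ne_zero).mpr ha)
          (neg_ne_zero.mpr a.ne_zero), neg_mem_iff_notMem P b.ne_zero]
      by_cases hb : (b : F) ∈ P <;> simp [ha, hb, hab]

open scoped Classical in
theorem sign_apply (a : Fˣ) : P.sign a = if (a : F) ∈ P then 1 else -1 :=
  rfl

theorem sign_mul_self (a : Fˣ) : P.sign (a * a) = 1 := by
  simp [sign_apply, P.mul_self_mem]

theorem sign_add_sign {a b c : Fˣ} (habc : (a : F) + b = c) :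
    P.sign a + P.sign b = P.sign c + P.sign (c * a * b) := by
  rw [map_mul, map_mul]
  by_cases ha : (a : F) ∈ P <;> by_cases hb : (b : F) ∈ P
  · have hc : (c : F) ∈ P := habc ▸ add_mem ha hb
    simp [sign_apply, ha, hb, hc]
  · simp [sign_apply, ha, hb]
  · simp [sign_apply, ha, hb]
  · have hc : (c : F) ∉ P := by
      rw [← neg_mem_iff_notMem P c.ne_zero, ← habc, neg_add]
      exact add_mem ((neg_mem_iff_notMem P a.ne_zero).mpr ha)
        ((neg_mem_iff_notMem P b.ne_zero).mpr hb)
    simp [sign_apply, ha, hb, hc]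

end Sign

end RingPreordering

namespace GW

variable {k : Type} [Field k]

noncomputable def lift (χ : kˣ →* ℤ) (hsq : ∀ a, χ (a * a) = 1)
    (hrel : ∀ a b c : kˣ, (a : k) + b = c → χ a + χ b = χ c + χ (c * a * b)) : GW k →+* ℤ :=
  Ideal.Quotient.lift (GWIdeal k) (MonoidAlgebra.lift ℤ ℤ kˣ χ).toRingHom fun x hx => by
    refine (Ideal.span_le (I := RingHom.ker _)).mpr ?_ hx
    rintro y (⟨a, rfl⟩ | ⟨a, b, c, habc, rfl⟩) <;>
      simp only [SetLike.mem_coe, RingHom.mem_ker, map_sub, map_add, map_one,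
        AlgHom.toRingHom_eq_coe, RingHom.coe_coe, MonoidAlgebra.lift_of]
    · rw [hsq, sub_self]
    · rw [hrel a b c habc]
      ring

@[simp]
theorem lift_GWform (χ : kˣ →* ℤ) (hsq) (hrel) (a : kˣ) : lift χ hsq hrel (GWform k a) = χ a :=
  MonoidAlgebra.lift_of χ a

noncomputable def rank : GW k →+* ℤ :=
  lift 1 (fun _ => rfl) (fun _ _ _ _ => rfl)

@[simp]
theorem rank_GWform (a : kˣ) : rank (GWform k a) = 1 :=
  lift_GWform _ _ _ a

noncomputable def signature (P : RingPreordering k) [HasMemOrNegMem P] : GW k →+* ℤ :=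
  lift P.sign P.sign_mul_self fun _ _ _ => P.sign_add_sign

@[simp]
theorem signature_GWform (P : RingPreordering k) [HasMemOrNegMem P] (a : kˣ) :
    signature P (GWform k a) = P.sign a :=
  lift_GWform _ _ _ a

end GW

section Burnside

variable {G : Type} [Group G]

theorem mark_top : mark (⊤ : Subgroup G) = 1 := by
  funext K
  have : Subsingleton (G ⧸ (⊤ : Subgroup G)) := QuotientGroup.subsingleton_quotient_top
  have : MulAction.fixedPoints K (G ⧸ (⊤ : Subgroup G)) = Set.univ :=
    Set.eq_univ_of_forall fun _ _ => Subsingleton.elim _ _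
  rw [mark, this, Nat.card_univ, ← Subgroup.index, Subgroup.index_top, Nat.cast_one, Pi.one_apply]

theorem mark_bot_apply_bot : mark (⊥ : Subgroup G) ⊥ = Nat.card G := by
  have : MulAction.fixedPoints (⊥ : Subgroup G) (G ⧸ (⊥ : Subgroup G)) = Set.univ :=
    Set.eq_univ_of_forall fun x g => by
      change (g : G) • x = x
      rw [Subgroup.mem_bot.mp g.2, one_smul]
  rw [mark, this, Nat.card_univ, ← Subgroup.index, Subgroup.index_bot]

theorem mark_bot_apply_of_ne_bot {K : Subgroup G} (hK : K ≠ ⊥) : mark (⊥ : Subgroup G) K = 0 := by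
  obtain ⟨σ, hσK, hσ⟩ := K.bot_or_exists_ne_one.resolve_left hK
  have : MulAction.fixedPoints K (G ⧸ (⊥ : Subgroup G)) = ∅ := by
    refine Set.eq_empty_of_forall_notMem fun x hx => hσ ?_
    obtain ⟨g, rfl⟩ := QuotientGroup.mk_surjective x
    have h : σ • (g : G ⧸ (⊥ : Subgroup G)) = g := hx ⟨σ, hσK⟩
    rw [MulAction.Quotient.smul_mk, QuotientGroup.eq, Subgroup.mem_bot] at h
    rwa [inv_mul_eq_one, smul_eq_mul, mul_eq_right] at h
  simp [mark, this]

theorem mark_bot_mul_self : mark (⊥ : Subgroup G) * mark ⊥ = (Nat.card G : ℤ) • mark ⊥ := by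
  funext K
  rcases eq_or_ne K ⊥ with rfl | hK
  · simp [mark_bot_apply_bot]
  · simp [mark_bot_apply_of_ne_bot hK]

theorem BurnsideRing.exists_eq_intCast_add_mul_burnsideElt_bot (hG : Nat.card G = 2)
    (x : BurnsideRing G) :
    ∃ a b : ℤ, x = (a : BurnsideRing G) + (b : BurnsideRing G) * burnsideElt ⊥ := by
  have : Fact (Nat.card G).Prime := ⟨hG ▸ Nat.prime_two⟩
  obtain ⟨x, hx⟩ := x
  suffices ∃ a b : ℤ, x = (a : Subgroup G → ℤ) + (b : Subgroup G → ℤ) * mark ⊥ by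
    obtain ⟨a, b, h⟩ := this
    exact ⟨a, b, Subtype.ext (by simpa [burnsideElt] using h)⟩
  induction hx using Subring.closure_induction with
  | mem f hf =>
    obtain ⟨H, rfl⟩ := hf
    rcases H.eq_bot_or_eq_top_of_prime_card with rfl | rfl
    · exact ⟨0, 1, by simp⟩
    · exact ⟨1, 0, by simp [mark_top]⟩
  | zero => exact ⟨0, 0, by simp⟩
  | one => exact ⟨1, 0, by simp⟩
  | add f g _ _ hf hg =>
    obtain ⟨a, b, rfl⟩ := hf
    obtain ⟨a', b', rfl⟩ := hg
    exact ⟨a + a', b + b', by push_cast; ring⟩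
  | neg f _ hf =>
    obtain ⟨a, b, rfl⟩ := hf
    exact ⟨-a, -b, by push_cast; ring⟩
  | mul f g _ _ hf hg =>
    obtain ⟨a, b, rfl⟩ := hf
    obtain ⟨a', b', rfl⟩ := hg
    refine ⟨a * a', a * b' + b * a' + 2 * b * b', ?_⟩
    have hE : mark (⊥ : Subgroup G) * mark ⊥ = 2 * mark ⊥ := by
      rw [mark_bot_mul_self, hG, Nat.cast_ofNat, zsmul_eq_mul, Int.cast_ofNat]
    push_cast
    linear_combination (b * b' : Subgroup G → ℤ) * hE

end Burnside

namespace IsGWClassOf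

variable {k V : Type} [Field k] [AddCommGroup V] [Module k V] {q : QuadraticForm k V} {x : GW k}

theorem rank_eq (hx : IsGWClassOf k q x) : GW.rank x = Module.finrank k V := by
  obtain ⟨m, d, ⟨f⟩, rfl⟩ := hx
  simp [f.toLinearEquiv.finrank_eq]

theorem signature_eq_zero (P : RingPreordering k) [HasMemOrNegMem P] (hx : IsGWClassOf k q x)
    (hV : Module.finrank k V = 2) {v w : V} (hv : q v ∉ P) (hw : -q w ∉ P) :
    GW.signature P x = 0 := by
  obtain ⟨m, d, ⟨f⟩, rfl⟩ := hx
  obtain rfl : m = 2 := by simpa [hV] using f.toLinearEquiv.finrank_eq.symm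
  have hq (u : V) : q u = QuadraticMap.weightedSumSquares k (fun i => (d i : k)) (f u) :=
    (f.map_app u).symm
  rw [map_sum, Fin.sum_univ_two, GW.signature_GWform, GW.signature_GWform, P.sign_apply,
    P.sign_apply]
  -- If both coefficients lay in `P` (resp. `-P`), so would every value of `q` (resp. `-q`).
  by_cases h0 : (d 0 : k) ∈ P <;> by_cases h1 : (d 1 : k) ∈ P
  · exact absurd (hq v ▸ P.weightedSumSquares_mem (Fin.forall_fin_two.mpr ⟨h0, h1⟩) _) hv
  · simp [h0, h1]
  · simp [h0, h1]
  · refine absurd ?_ hw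
    have hneg : ∀ i, -(d i : k) ∈ P :=
      Fin.forall_fin_two.mpr ⟨(P.neg_mem_iff_notMem (d 0).ne_zero).mpr h0,
        (P.neg_mem_iff_notMem (d 1).ne_zero).mpr h1⟩
    simpa only [hq, QuadraticMap.weightedSumSquares_apply, neg_smul, Finset.sum_neg_distrib] using
      P.weightedSumSquares_mem hneg (f w)

end IsGWClassOf

namespace IsDressMap

variable {k L : Type} [Field k] [Field L] [Algebra k L] {h : BurnsideRing (L ≃ₐ[k] L) →+* GW k}

theorem rank_burnsideElt_bot (hD : IsDressMap k L h) :
    GW.rank (h (burnsideElt ⊥)) = Module.finrank k L := by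
  rw [(hD ⊥).rank_eq, IntermediateField.fixedField_bot, IntermediateField.finrank_top']

theorem signature_burnsideElt_bot (hD : IsDressMap k L h) (P : RingPreordering k)
    [HasMemOrNegMem P] (h2 : (2 : k) ≠ 0) (hdeg : Module.finrank k L = 2) {α : k} (hα : α ∉ P)
    {s : L} (hs : s ^ 2 = algebraMap k L α) : GW.signature P (h (burnsideElt ⊥)) = 0 := by
  have hdegE : Module.finrank k (IntermediateField.fixedField (⊥ : Subgroup (L ≃ₐ[k] L))) = 2 := by
    rw [IntermediateField.fixedField_bot, IntermediateField.finrank_top', hdeg]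
  set E := IntermediateField.fixedField (⊥ : Subgroup (L ≃ₐ[k] L))
  have htrace (a : k) : Algebra.trace k E (algebraMap k E a) = 2 * a := by
    rw [Algebra.trace_algebraMap, hdegE, two_nsmul, two_mul]
  have h2P : (2 : k) ∈ P := by
    simpa only [one_add_one_eq_two] using add_mem (one_mem P) (one_mem P)
  let t : E := ⟨s, by simp [E]⟩
  refine (hD ⊥).signature_eq_zero P hdegE (v := t) (w := 1) ?_ ?_
  · have htt : t * t = algebraMap k E α := Subtype.ext (by simpa [sq] using hs)
    rw [LinearMap.BilinMap.toQuadraticMap_apply, Algebra.traceForm_apply, htt, htrace,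
      P.mul_mem_iff_of_mem h2P h2]
    exact hα
  · rw [LinearMap.BilinMap.toQuadraticMap_apply, Algebra.traceForm_apply, mul_one,
      ← map_one (algebraMap k E), htrace, mul_one, P.neg_mem_iff_notMem h2, not_not]
    exact h2P

end IsDressMap

theorem stmt14_general (k L : Type) [Field k] [Field L] [Algebra k L]
    [FiniteDimensional k L] [IsGalois k L] (h2 : (2 : k) ≠ 0)
    (α : k) (hα : α ≠ 0) (hss : ¬ IsSumSq α)
    (s : L) (hs : s ^ 2 = algebraMap k L α)
    (hdeg : Module.finrank k L = 2)
    (h : BurnsideRing (L ≃ₐ[k] L) →+* GW k) (hD : IsDressMap k L h) :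
    Function.Injective h := by
  obtain ⟨P, hP, hαP⟩ := RingPreordering.exists_isOrdering_neg_mem h2 hss
  have hsign := hD.signature_burnsideElt_bot P h2 hdeg ((P.neg_mem_iff_notMem hα).mp hαP) hs
  have hG : Nat.card (L ≃ₐ[k] L) = 2 := by rw [IsGalois.card_aut_eq_finrank, hdeg]
  refine (injective_iff_map_eq_zero h).mpr fun x hx => ?_
  obtain ⟨a, b, rfl⟩ := BurnsideRing.exists_eq_intCast_add_mul_burnsideElt_bot hG x
  rw [map_add, map_mul, map_intCast, map_intCast] at hx
  have key (φ : GW k →+* ℤ) : a + b * φ (h (burnsideElt ⊥)) = 0 := by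
    have := congrArg φ hx
    rwa [map_add, map_mul, map_intCast, map_intCast, map_zero, Int.cast_id, Int.cast_id] at this
  have hsig := key (GW.signature P)
  have hrk := key GW.rank
  rw [hsign] at hsig
  rw [hD.rank_burnsideElt_bot, hdeg] at hrk
  obtain ⟨rfl, rfl⟩ : a = 0 ∧ b = 0 := by omega
  simp

/-- If `L = k(√α)` is a quadratic extension (char `k` ≠ 2) with `α ∈ kˣ` not a sum of
squares in `k`, then the Dress map `A(ℤ/2ℤ) = A(Gal(L/k)) → GW(k)` is injective. -/
theorem stmt14 (k L : Type) [Field k] [Field L] [Algebra k L]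
    [FiniteDimensional k L] [IsGalois k L] (h2 : (2 : k) ≠ 0)
    (α : k) (hα : α ≠ 0) (hss : ¬ IsSumSq α)
    (s : L) (hs : s ^ 2 = algebraMap k L α) (hgen : Algebra.adjoin k {s} = ⊤)
    (hdeg : Module.finrank k L = 2)
    (h : BurnsideRing (L ≃ₐ[k] L) →+* GW k) (hD : IsDressMap k L h) :
    Function.Injective h :=
  stmt14_general k L h2 α hα hss s hs hdeg h hD
end
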